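/- Let r ≥ 1 and n ≥ r. Then the maximum number of {0,r}-transversals over all r-uniform hypergraphs on n vertices with no isolated vertices equals 2^{⌊n/r⌋}. -/
import Mathlib

open Relation

theorem upper_bd (r n : ℕ) (hr : 1 ≤ r) (E : Finset (Finset (Fin n)))
    (hcard : ∀ H ∈ E, H.card = r) (hcover : ∀ v : Fin n, ∃ H ∈ E, v ∈ H) :
    {S : Finset (Fin n) |
      ∀ H ∈ E, (H ∩ S).card = 0 ∨ (H ∩ S).card = r}.ncard ≤ 2 ^ (n / r) := by
  classical
  set R : Fin n → Fin n → Prop := fun u v => ∃ H ∈ E, u ∈ H ∧ v ∈ H with hR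
  set s : Setoid (Fin n) := EqvGen.setoid R with hs
  set T : Set (Finset (Fin n)) :=
    {S : Finset (Fin n) | ∀ H ∈ E, (H ∩ S).card = 0 ∨ (H ∩ S).card = r} with hT
  -- every transversal is closed under EqvGen R
  have hsubR : ∀ S ∈ T, ∀ H ∈ E, ∀ u ∈ H, u ∈ S → H ⊆ S := by
    intro S hS H hH u hu huS
    have := hS H hH
    rcases this with h0 | hrr
    · exfalso
      have : u ∈ H ∩ S := Finset.mem_inter.2 ⟨hu, huS⟩
      rw [Finset.card_eq_zero] at h0
      simp [h0] at this
    · have heq : H ∩ S = H := Finset.eq_of_subset_of_card_le Finset.inter_subset_left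
        (by rw [hrr, hcard H hH])
      intro x hx
      rw [← heq] at hx
      exact (Finset.mem_inter.1 hx).2
  have hclosed : ∀ S ∈ T, ∀ u v, EqvGen R u v → (u ∈ S ↔ v ∈ S) := by
    intro S hS u v h
    induction h with
    | rel u v huv =>
      obtain ⟨H, hH, hu, hv⟩ := huv
      constructor
      · intro hus; exact hsubR S hS H hH u hu hus hv
      · intro hvs; exact hsubR S hS H hH v hv hvs hu
    | refl u => rfl
    | symm u v _ ih => exact ih.symm
    | trans u v w _ _ ih1 ih2 => exact ih1.trans ih2
  have hmemiff : ∀ S ∈ T, ∀ v : Fin n,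
      (Quotient.mk s v ∈ S.image (Quotient.mk s)) ↔ v ∈ S := by
    intro S hS v
    constructor
    · intro h
      obtain ⟨u, huS, hq⟩ := Finset.mem_image.1 h
      have : EqvGen R u v := Quotient.eq.1 hq
      exact (hclosed S hS u v this).1 huS
    · intro h; exact Finset.mem_image_of_mem _ h
  have hinj : Set.InjOn (fun S : Finset (Fin n) => S.image (Quotient.mk s)) T := by
    intro S1 h1 S2 h2 h
    ext v
    rw [← hmemiff S1 h1 v, ← hmemiff S2 h2 v]
    simp only at h
    rw [h]
  -- bound number of classes
  have hfiber : ∀ w : Quotient s,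
      r ≤ (Finset.univ.filter (fun v : Fin n => Quotient.mk s v = w)).card := by
    intro w
    obtain ⟨v, rfl⟩ := Quotient.exists_rep w
    obtain ⟨H, hH, hv⟩ := hcover v
    have hsub : H ⊆ Finset.univ.filter (fun u : Fin n => Quotient.mk s u = Quotient.mk s v) := by
      intro u hu
      simp only [Finset.mem_filter, Finset.mem_univ, true_and]
      exact Quotient.sound (EqvGen.rel u v ⟨H, hH, hu, hv⟩)
    calc r = H.card := (hcard H hH).symm
    _ ≤ _ := Finset.card_le_card hsub
  have hq : Fintype.card (Quotient s) ≤ n / r := by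
    rw [Nat.le_div_iff_mul_le hr]
    have hn' : (Finset.univ : Finset (Fin n)).card
        = ∑ w : Quotient s, (Finset.univ.filter (fun v : Fin n => Quotient.mk s v = w)).card :=
      Finset.card_eq_sum_card_fiberwise (fun x _ => Finset.mem_univ _)
    calc Fintype.card (Quotient s) * r = ∑ _w : Quotient s, r := by
          rw [Finset.sum_const, smul_eq_mul, Fintype.card]
      _ ≤ ∑ w : Quotient s, (Finset.univ.filter (fun v : Fin n => Quotient.mk s v = w)).card :=
          Finset.sum_le_sum (fun w _ => hfiber w)
      _ = (Finset.univ : Finset (Fin n)).card := hn'.symm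
      _ = n := by simp
  calc T.ncard = ((fun S : Finset (Fin n) => S.image (Quotient.mk s)) '' T).ncard :=
        (Set.ncard_image_of_injOn hinj).symm
    _ ≤ (Set.univ : Set (Finset (Quotient s))).ncard :=
        Set.ncard_le_ncard (Set.subset_univ _) Set.finite_univ
    _ = 2 ^ Fintype.card (Quotient s) := by
        rw [Set.ncard_univ, Nat.card_eq_fintype_card, Fintype.card_finset]
    _ ≤ 2 ^ (n / r) := Nat.pow_le_pow_right (by norm_num) hq

theorem lt_divmul (a b : ℕ) (h : 0 < b) : a < a / b * b + b := by
  have h1 := Nat.mod_add_div' a b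
  have h2 := Nat.mod_lt a h
  omega

theorem lower_bd (r n : ℕ) (hr : 1 ≤ r) (hn : r ≤ n) :
    ∃ E : Finset (Finset (Fin n)),
      (∀ H ∈ E, H.card = r) ∧ (∀ v : Fin n, ∃ H ∈ E, v ∈ H) ∧
      {S : Finset (Fin n) |
        ∀ H ∈ E, (H ∩ S).card = 0 ∨ (H ∩ S).card = r}.ncard = 2 ^ (n / r) := by
  classical
  have h0r : 0 < r := hr
  have hq1 : 1 ≤ n / r := (Nat.one_le_div_iff h0r).2 hn
  have hA : n / r * r ≤ n := Nat.div_mul_le_self n r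
  have hB : n < n / r * r + r := lt_divmul n r h0r
  have hrq : r ≤ n / r * r := by
    have := Nat.mul_le_mul_right r hq1
    simpa using this
  have hC : (n / r - 1) * r + r = n / r * r := by
    rw [Nat.sub_mul, one_mul]
    omega
  -- the edges
  set e : ℕ → Finset (Fin n) :=
    fun a => Finset.univ.filter (fun v : Fin n => a ≤ v.val ∧ v.val < a + r) with he
  have hmem_e : ∀ a (v : Fin n), v ∈ e a ↔ a ≤ v.val ∧ v.val < a + r := by
    intro a v; simp [he]
  have hcard_e : ∀ a, a + r ≤ n → (e a).card = r := by
    intro a ha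
    have himg : (e a).image Fin.val = Finset.Ico a (a + r) := by
      ext m
      simp only [Finset.mem_image, Finset.mem_Ico, hmem_e]
      constructor
      · rintro ⟨v, hv, rfl⟩; exact hv
      · rintro ⟨h1, h2⟩; exact ⟨⟨m, lt_of_lt_of_le h2 ha⟩, ⟨h1, h2⟩, rfl⟩
    have := Finset.card_image_of_injective (e a) Fin.val_injective
    rw [himg] at this
    rw [← this, Nat.card_Ico]
    omega
  set E : Finset (Finset (Fin n)) :=
    (Finset.range (n / r)).image (fun i => e (i * r)) ∪ {e (n - r)} with hE
  have hEi : ∀ i, i < n / r → e (i * r) ∈ E := by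
    intro i hi
    rw [hE]
    exact Finset.mem_union_left _ (Finset.mem_image_of_mem _ (Finset.mem_range.2 hi))
  have hElast : e (n - r) ∈ E := by
    rw [hE]; exact Finset.mem_union_right _ (Finset.mem_singleton_self _)
  have hcard : ∀ H ∈ E, H.card = r := by
    intro H hH
    rw [hE, Finset.mem_union, Finset.mem_image] at hH
    rcases hH with ⟨i, hi, rfl⟩ | hH
    · rw [Finset.mem_range] at hi
      apply hcard_e
      calc i * r + r = (i + 1) * r := by ring
        _ ≤ n / r * r := Nat.mul_le_mul_right r hi
        _ ≤ n := hA
    · rw [Finset.mem_singleton] at hH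
      subst hH
      exact hcard_e _ (by omega)
  have hcover : ∀ v : Fin n, ∃ H ∈ E, v ∈ H := by
    intro v
    by_cases h : v.val < n / r * r
    · refine ⟨e (v.val / r * r), hEi _ ?_, ?_⟩
      · exact (Nat.div_lt_iff_lt_mul h0r).2 h
      · rw [hmem_e]
        refine ⟨Nat.div_mul_le_self _ _, ?_⟩
        exact lt_divmul v.val r h0r
    · refine ⟨e (n - r), hElast, ?_⟩
      rw [hmem_e]
      have := v.isLt
      omega
  -- closure under full-in-or-out
  have hsubR : ∀ S : Finset (Fin n),
      (∀ H ∈ E, (H ∩ S).card = 0 ∨ (H ∩ S).card = r) →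
      ∀ H ∈ E, ∀ u ∈ H, u ∈ S → H ⊆ S := by
    intro S hS H hH u hu huS
    rcases hS H hH with h0 | hrr
    · exfalso
      have : u ∈ H ∩ S := Finset.mem_inter.2 ⟨hu, huS⟩
      rw [Finset.card_eq_zero] at h0
      simp [h0] at this
    · have heq : H ∩ S = H := Finset.eq_of_subset_of_card_le Finset.inter_subset_left
        (by rw [hrr, hcard H hH])
      intro x hx
      rw [← heq] at hx
      exact (Finset.mem_inter.1 hx).2
  -- the index map
  have hqpos : 0 < n / r := hq1
  set c : Fin n → Fin (n / r) :=
    fun v => ⟨min (v.val / r) (n / r - 1), by omega⟩ with hc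
  -- w := n - r is in both last edges
  have hw : n - r < n := by omega
  have hwmem1 : (⟨n - r, hw⟩ : Fin n) ∈ e ((n / r - 1) * r) := by
    rw [hmem_e]
    show (n / r - 1) * r ≤ n - r ∧ n - r < (n / r - 1) * r + r
    omega
  have hwmem2 : (⟨n - r, hw⟩ : Fin n) ∈ e (n - r) := by
    rw [hmem_e]
    show n - r ≤ n - r ∧ n - r < n - r + r
    omega
  -- any vertex in the tail region lies in one of the two last edges
  have htail : ∀ u : Fin n, (n / r - 1) * r ≤ u.val →
      u ∈ e ((n / r - 1) * r) ∨ u ∈ e (n - r) := by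
    intro u hu
    by_cases h : u.val < n / r * r
    · left; rw [hmem_e]; omega
    · right; rw [hmem_e]; have := u.isLt; omega
  have hlast_in : e ((n / r - 1) * r) ∈ E := hEi _ (by omega)
  -- closure: membership in a transversal only depends on c
  have hclosed : ∀ S : Finset (Fin n),
      (∀ H ∈ E, (H ∩ S).card = 0 ∨ (H ∩ S).card = r) →
      ∀ u v : Fin n, c u = c v → u ∈ S → v ∈ S := by
    intro S hS u v hcv huS
    have hcv' : min (u.val / r) (n / r - 1) = min (v.val / r) (n / r - 1) := by
      have := congrArg Fin.val hcv
      simpa [hc] using this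
    by_cases hi : u.val / r < n / r - 1
    · -- both in the edge e ((u.val / r) * r)
      have hu1 : min (u.val / r) (n / r - 1) = u.val / r := by omega
      have hv1 : v.val / r = u.val / r := by omega
      have hedge : e (u.val / r * r) ∈ E := hEi _ (by omega)
      have humem : u ∈ e (u.val / r * r) := by
        rw [hmem_e]
        have h1 := Nat.div_mul_le_self u.val r
        exact ⟨h1, lt_divmul u.val r h0r⟩
      have hvmem : v ∈ e (u.val / r * r) := by
        rw [hmem_e]
        have h1 := Nat.div_mul_le_self v.val r
        have h2 := lt_divmul v.val r h0r
        rw [hv1] at h1 h2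
        exact ⟨h1, h2⟩
      exact hsubR S hS _ hedge u humem huS hvmem
    · -- tail case
      have hu2 : n / r - 1 ≤ u.val / r := by omega
      have hv2 : n / r - 1 ≤ v.val / r := by omega
      have hu3 : (n / r - 1) * r ≤ u.val := by
        calc (n / r - 1) * r ≤ u.val / r * r := Nat.mul_le_mul_right r hu2
          _ ≤ u.val := Nat.div_mul_le_self _ _
      have hv3 : (n / r - 1) * r ≤ v.val := by
        calc (n / r - 1) * r ≤ v.val / r * r := Nat.mul_le_mul_right r hv2
          _ ≤ v.val := Nat.div_mul_le_self _ _
      have hwS : (⟨n - r, hw⟩ : Fin n) ∈ S := by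
        rcases htail u hu3 with h | h
        · exact hsubR S hS _ hlast_in u h huS hwmem1
        · exact hsubR S hS _ hElast u h huS hwmem2
      rcases htail v hv3 with h | h
      · exact hsubR S hS _ hlast_in _ hwmem1 hwS h
      · exact hsubR S hS _ hElast _ hwmem2 hwS h
  -- g : subsets of Fin (n/r) → transversals
  set g : Finset (Fin (n / r)) → Finset (Fin n) :=
    fun A => Finset.univ.filter (fun v => c v ∈ A) with hg
  -- canonical representative of each class
  have hrep : ∀ i : Fin (n / r), ∃ v : Fin n, c v = i := by
    intro i
    have hilt : i.val * r < n := by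
      have h1 : i.val + 1 ≤ n / r := i.isLt
      calc i.val * r < (i.val + 1) * r :=
            (Nat.mul_lt_mul_right h0r).2 (Nat.lt_succ_self _)
        _ ≤ n / r * r := Nat.mul_le_mul_right r h1
        _ ≤ n := hA
    refine ⟨⟨i.val * r, hilt⟩, ?_⟩
    have hdiv : i.val * r / r = i.val := Nat.mul_div_cancel _ h0r
    apply Fin.ext
    simp only [hc, hdiv]
    have := i.isLt
    omega
  have hginj : Function.Injective g := by
    intro A B hAB
    ext i
    obtain ⟨v, rfl⟩ := hrep i
    have : v ∈ g A ↔ v ∈ g B := by rw [hAB]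
    simpa [hg] using this
  -- edges are c-fibers-compatible: each edge has constant c
  have hedge_const : ∀ H ∈ E, ∀ u ∈ H, ∀ v ∈ H, c u = c v := by
    intro H hH u hu v hv
    rw [hE, Finset.mem_union, Finset.mem_image] at hH
    apply Fin.ext
    rcases hH with ⟨i, hi, rfl⟩ | hH
    · rw [Finset.mem_range] at hi
      rw [hmem_e] at hu hv
      have hud : u.val / r = i := Nat.div_eq_of_lt_le (by omega) (by rw [add_mul, one_mul]; omega)
      have hvd : v.val / r = i := Nat.div_eq_of_lt_le (by omega) (by rw [add_mul, one_mul]; omega)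
      simp [hc, hud, hvd]
    · rw [Finset.mem_singleton] at hH
      subst hH
      rw [hmem_e] at hu hv
      have hud : n / r - 1 ≤ u.val / r := by
        apply Nat.le_div_iff_mul_le h0r |>.2
        omega
      have hvd : n / r - 1 ≤ v.val / r := by
        apply Nat.le_div_iff_mul_le h0r |>.2
        omega
      simp only [hc]
      omega
  -- g A is a transversal
  have hgT : ∀ A : Finset (Fin (n / r)),
      ∀ H ∈ E, (H ∩ g A).card = 0 ∨ (H ∩ g A).card = r := by
    intro A H hH
    by_cases h : ∃ u ∈ H, u ∈ g A
    · right
      obtain ⟨u, hu, huA⟩ := h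
      have : H ∩ g A = H := by
        apply Finset.inter_eq_left.2
        intro v hv
        simp only [hg, Finset.mem_filter, Finset.mem_univ, true_and] at huA ⊢
        rw [← hedge_const H hH u hu v hv]
        exact huA
      rw [this]; exact hcard H hH
    · left
      rw [Finset.card_eq_zero]
      push_neg at h
      ext v
      simp only [Finset.mem_inter, Finset.notMem_empty, iff_false]
      rintro ⟨h1, h2⟩
      exact absurd h2 (by simpa using h v h1)
  -- transversals are exactly range g
  have hTeq : {S : Finset (Fin n) | ∀ H ∈ E, (H ∩ S).card = 0 ∨ (H ∩ S).card = r}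
      = Set.range g := by
    ext S
    constructor
    · intro hS
      refine ⟨S.image c, ?_⟩
      ext v
      simp only [hg, Finset.mem_filter, Finset.mem_univ, true_and, Finset.mem_image]
      constructor
      · rintro ⟨u, huS, hcu⟩
        exact hclosed S hS u v hcu huS
      · intro hv; exact ⟨v, hv, rfl⟩
    · rintro ⟨A, rfl⟩
      exact hgT A
  refine ⟨E, hcard, hcover, ?_⟩
  rw [hTeq, ← Set.image_univ, Set.ncard_image_of_injOn hginj.injOn, Set.ncard_univ,
    Nat.card_eq_fintype_card, Fintype.card_finset, Fintype.card_fin]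

theorem max_zero_r_transversals (r n : ℕ) (hr : 1 ≤ r) (hn : r ≤ n) :
    IsGreatest {m : ℕ | ∃ E : Finset (Finset (Fin n)),
      (∀ H ∈ E, H.card = r) ∧ (∀ v : Fin n, ∃ H ∈ E, v ∈ H) ∧
      {S : Finset (Fin n) |
        ∀ H ∈ E, (H ∩ S).card = 0 ∨ (H ∩ S).card = r}.ncard = m}
      (2 ^ (n / r)) := by
  constructor
  · obtain ⟨E, h1, h2, h3⟩ := lower_bd r n hr hn
    exact ⟨E, h1, h2, h3⟩
  · rintro m ⟨E, h1, h2, rfl⟩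
    exact upper_bd r n hr E h1 h2
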